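/- Let V be a finite type, E : V → V → Prop a directed graph, and s, t : V with s ≠ t. Define an s–t path to be a nonempty list of vertices beginning with s, ending with t, whose consecutive entries are related by E. Say a set S ⊆ V with s ∉ S and t ∉ S is an s–t vertex cut if every s–t path contains some vertex of S. Suppose S is an s–t vertex cut that is minimal with respect to inclusion (no proper subset of S is an s–t vertex cut), and suppose at least one s–t path exists. Then for every v ∈ S there exists an s–t path whose intersection with S is exactly {v}. -/
import Mathlib


/-- A path from `s` to `t` in the directed graph `E`: a nonempty list of vertices
starting at `s`, ending at `t`, whose consecutive entries are related by `E`. -/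
def IsDiPath {V : Type*} (E : V → V → Prop) (s t : V) (l : List V) : Prop :=
  l ≠ [] ∧ l.head? = some s ∧ l.getLast? = some t ∧ l.Chain' E

/-- `S` is an `s`–`t` vertex cut: `s ∉ S`, `t ∉ S`, and every `s`–`t` path meets `S`. -/
def IsVertexCut {V : Type*} (E : V → V → Prop) (s t : V) (S : Set V) : Prop :=
  s ∉ S ∧ t ∉ S ∧ ∀ l : List V, IsDiPath E s t l → ∃ v ∈ S, v ∈ l

/-- For an inclusion-minimal `s`–`t` vertex cut `S` (assuming some `s`–`t` path exists),
every `v ∈ S` lies on an `s`–`t` path whose intersection with `S` is exactly `{v}`. -/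
theorem minimal_cut_path_through_exactly_one_node
    {V : Type*} [Fintype V] (E : V → V → Prop) (s t : V) (hst : s ≠ t)
    (S : Set V) (hcut : IsVertexCut E s t S)
    (hmin : ∀ T : Set V, T ⊂ S → ¬ IsVertexCut E s t T)
    (hpath : ∃ l : List V, IsDiPath E s t l) :
    ∀ v ∈ S, ∃ l : List V, IsDiPath E s t l ∧ {w | w ∈ S ∧ w ∈ l} = {v} := by
  intro v hv
  obtain ⟨hs, ht, hS⟩ := hcut
  have hsub : S \ {v} ⊂ S := Set.sdiff_singleton_ssubset.mpr hv
  have hnc := hmin _ hsub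
  unfold IsVertexCut at hnc
  push_neg at hnc
  obtain ⟨l, hl, hlv⟩ := hnc (fun h => hs h.1) (fun h => ht h.1)
  refine ⟨l, hl, ?_⟩
  ext w
  simp only [Set.mem_setOf_eq, Set.mem_singleton_iff]
  constructor
  · rintro ⟨hwS, hwl⟩
    by_contra hne
    exact hlv w ⟨hwS, hne⟩ hwl
  · rintro rfl
    obtain ⟨u, huS, hul⟩ := hS l hl
    have huw : u = w := by
      by_contra hne
      exact hlv u ⟨huS, hne⟩ hul
    exact ⟨huw ▸ huS, huw ▸ hul⟩
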